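/- Let E ⊂ ℂ be closed in ℂ and suppose E ∪ {∞} is connected in the Riemann sphere. Then every connected component of E is unbounded. -/

import Mathlib

/-!
Suppose the component `C` of `x` in `E` is bounded. Since `E` is closed, `C` is compact and `E`
is locally compact, so `C` lies in the interior of a compact subset `K` of `E`. In the compact
Hausdorff space `K` components are intersections of clopen sets, so by compactness a single clopen
subset of `K` contains `C` and avoids the boundary of `K`; it is then a nonempty compact open
subset of `E`. Such a set and its complement split `E ∪ {∞}` into two relatively open pieces, the
second containing `∞`.
-/

open OnePoint Set Metric Bornology

theorem exists_isClopen_subset_of_connectedComponent_subset {X : Type*} [TopologicalSpace X]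
    [CompactSpace X] [T2Space X] {x : X} {U : Set X} (hU : IsOpen U)
    (hxU : connectedComponent x ⊆ U) : ∃ V, IsClopen V ∧ x ∈ V ∧ V ⊆ U := by
  have hdisj : Uᶜ ∩ ⋂ V : {V : Set X // IsClopen V ∧ x ∈ V}, (V : Set X) = ∅ := by
    rw [← connectedComponent_eq_iInter_isClopen, ← disjoint_iff_inter_eq_empty]
    exact disjoint_compl_left.mono_right hxU
  obtain ⟨t, ht⟩ := hU.isClosed_compl.isCompact.elim_finite_subfamily_closed _
    (fun V => V.2.1.isClosed) hdisj
  refine ⟨⋂ V ∈ t, (V : Set X), isClopen_biInter_finset fun V _ => V.2.1,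
    mem_iInter₂.2 fun V _ => V.2.2, ?_⟩
  rwa [← disjoint_iff_inter_eq_empty, disjoint_compl_left_iff_subset] at ht

section T2

variable {X : Type*} [TopologicalSpace X] [T2Space X]

theorem exists_isCompact_isOpen_of_connectedComponentIn_subset {K U : Set X} {x : X}
    (hK : IsCompact K) (hU : IsOpen U) (hUK : U ⊆ K) (hx : x ∈ K)
    (hxU : connectedComponentIn K x ⊆ U) : ∃ s, IsCompact s ∧ IsOpen s ∧ x ∈ s ∧ s ⊆ U := by
  have : CompactSpace K := isCompact_iff_compactSpace.1 hK
  have hcomp : connectedComponent (⟨x, hx⟩ : K) ⊆ (↑) ⁻¹' U := by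
    rwa [← image_subset_iff, ← connectedComponentIn_eq_image hx]
  obtain ⟨V, hV, hxV, hVU⟩ :=
    exists_isClopen_subset_of_connectedComponent_subset (hU.preimage continuous_subtype_val) hcomp
  obtain ⟨W, hW, rfl⟩ := isOpen_induced_iff.1 hV.isOpen
  have hWU : (↑) '' ((↑) ⁻¹' W : Set K) = W ∩ U := by
    rw [← inter_eq_left.2 (image_subset_iff.2 hVU), Subtype.image_preimage_coe, inter_assoc,
      inter_eq_right.2 (inter_subset_right.trans hUK)]
  refine ⟨(↑) '' ((↑) ⁻¹' W : Set K), hV.isClosed.isCompact.image continuous_subtype_val, ?_,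
    ⟨⟨x, hx⟩, hxV, rfl⟩, image_subset_iff.2 hVU⟩
  rw [hWU]
  exact hW.inter hU

theorem exists_isCompact_isOpen_of_isCompact_connectedComponent [WeaklyLocallyCompactSpace X]
    {x : X} (hx : IsCompact (connectedComponent x)) : ∃ s, IsCompact s ∧ IsOpen s ∧ x ∈ s := by
  obtain ⟨K, hK, hxK⟩ := exists_compact_superset hx
  have hxK' : x ∈ K := interior_subset (hxK mem_connectedComponent)
  obtain ⟨s, hs, hso, hxs, -⟩ := exists_isCompact_isOpen_of_connectedComponentIn_subset hK
    isOpen_interior interior_subset hxK'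
    ((isPreconnected_connectedComponentIn.subset_connectedComponent
      (mem_connectedComponentIn hxK')).trans hxK)
  exact ⟨s, hs, hso, hxs⟩

theorem OnePoint.not_isPreconnected_image_union_infty {S : Set X} {t : Set S}
    (ht : IsCompact t) (hto : IsOpen t) (hne : t.Nonempty) :
    ¬ IsPreconnected (((↑) : X → OnePoint X) '' S ∪ {∞}) := by
  obtain ⟨O, hO, rfl⟩ := isOpen_induced_iff.1 hto
  have hSO : IsCompact (S ∩ O) := by
    simpa only [Subtype.image_preimage_coe] using ht.image continuous_subtype_val
  have hcover : ((↑) : X → OnePoint X) '' S ∪ {∞} ⊆ (↑) '' O ∪ ((↑) '' (S ∩ O))ᶜ := by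
    rintro a (⟨w, hwS, rfl⟩ | rfl)
    · by_cases hwO : w ∈ O
      · exact Or.inl ⟨w, hwO, rfl⟩
      · exact Or.inr fun ⟨w', hw', hw'w⟩ => hwO (coe_injective hw'w ▸ hw'.2)
    · exact Or.inr infty_notMem_image_coe
  obtain ⟨⟨z, hzS⟩, hzO⟩ := hne
  intro hconn
  obtain ⟨a, ha, ⟨w, hwO, rfl⟩, hav⟩ := hconn _ _ (isOpenMap_coe O hO)
    (isOpen_compl_image_coe.2 ⟨hSO.isClosed, hSO⟩) hcover ⟨z, Or.inl ⟨z, hzS, rfl⟩, z, hzO, rfl⟩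
    ⟨∞, Or.inr rfl, infty_notMem_image_coe⟩
  simp only [mem_union, mem_image, coe_eq_coe, exists_eq_right, mem_singleton_iff,
    coe_ne_infty, or_false] at ha
  exact hav ⟨w, ⟨ha, hwO⟩, rfl⟩

end T2

theorem IsClosed.isCompact_connectedComponent_of_isBounded {α : Type*} [PseudoMetricSpace α]
    [ProperSpace α] {E : Set α} (hE : IsClosed E) {x : E}
    (hb : IsBounded (connectedComponentIn E x)) : IsCompact (connectedComponent x) := by
  rw [Subtype.isCompact_iff, ← connectedComponentIn_eq_image x.2]
  refine isCompact_of_isClosed_isBounded ?_ hb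
  rw [connectedComponentIn_eq_image x.2]
  exact hE.isClosedMap_subtype_val _ isClosed_connectedComponent

open OnePoint in
/-- If `E ⊆ ℂ` is closed and `E ∪ {∞}` is connected in the Riemann sphere, then every
connected component of `E` is unbounded. -/
theorem components_unbounded_of_closed_union_infty_connected (E : Set ℂ)
    (hE : IsClosed E)
    (h : IsConnected ((((↑) : ℂ → OnePoint ℂ) '' E) ∪ {(∞ : OnePoint ℂ)})) :
    ∀ x ∈ E, ¬ Bornology.IsBounded (connectedComponentIn E x) := by
  intro x hx hb
  have : LocallyCompactSpace E := hE.locallyCompactSpace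
  obtain ⟨t, ht, hto, hxt⟩ := exists_isCompact_isOpen_of_isCompact_connectedComponent
    (hE.isCompact_connectedComponent_of_isBounded (x := ⟨x, hx⟩) hb)
  exact not_isPreconnected_image_union_infty ht hto ⟨_, hxt⟩ h.isPreconnected
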